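/- arXiv:2204.12132 — 2 statements merged into one kernel-verified Lean document; each statement's English description precedes it below -/
import Mathlib

section
/- Let $R$ be a Noetherian ring and $M$ a torsion-free $R$-module. Then $M=\widetilde{M}$ if and only if every pair of non-zerodivisors $a,b\in R$ with $\mathrm{ht}_R(a,b)\ge 2$ is an $M$-regular sequence. In particular, $\widetilde{M}=\widetilde{\widetilde{M}}$ always holds. -/
/-!
An element `f` lies in `M̃` iff its conductor `(M : f)` has height `≥ 2`.

If `M = M̃` and `ht (a, b) ≥ 2`, then `b x = a y` makes `z = x / a` satisfy `(a, b) z ⊆ M`, so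
`z ∈ M`. Conversely, for `f ∈ M̃` choose a non-zerodivisor `t` with `t f ∈ M`. Prime avoidance
against the minimal primes of `(t)` (of height `≤ 1` by Krull) and the associated primes of `R`
gives a non-zerodivisor `b ∈ (M : f)` with `ht (t, b) ≥ 2`, and regularity of `t, b` applied to
`b (t f) = t (b f)` puts `f` in `M`. For idempotence, if `I f ⊆ M̃` with `ht I ≥ 2`, a prime
containing `(M : f)` either contains `I` or misses some `i ∈ I`, and then contains `(M : i f)`.
-/

open Pointwise

/-- The height of an ideal. -/
noncomputable def idealHt {R : Type*} [CommRing R] (I : Ideal R) : ℕ∞ :=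
  ⨅ p ∈ {p : PrimeSpectrum R | I ≤ p.asIdeal}, Order.height p

section Height

variable {R : Type*} [CommRing R]

lemma idealHt_eq_height (I : Ideal R) : idealHt I = I.height := by
  refine le_antisymm ?_ (le_iInf₂ fun p (hp : I ≤ p.asIdeal) => ?_)
  · rw [Ideal.height_eq_inf_minimalPrimes]
    exact le_iInf₂ fun q hq => (iInf₂_le (⟨q, hq.isPrime⟩ : PrimeSpectrum R) hq.1.2).trans_eq
      (PrimeSpectrum.height_eq_orderHeight _).symm
  · exact (Ideal.height_mono hp).trans_eq (PrimeSpectrum.height_eq_orderHeight p)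

lemma Ideal.le_height_iff {I : Ideal R} {n : ℕ∞} :
    n ≤ I.height ↔ ∀ p : PrimeSpectrum R, I ≤ p.asIdeal → n ≤ p.asIdeal.height := by
  simp only [← idealHt_eq_height I, idealHt, le_iInf_iff, PrimeSpectrum.height_eq_orderHeight]
  rfl

open Ideal nonZeroDivisors in
lemma Ideal.exists_mem_nonZeroDivisors_two_le_height_span_pair [IsNoetherianRing R]
    {J : Ideal R} (hJ : 2 ≤ J.height) {s : R} (hs : s ∈ R⁰) (hsJ : s ∈ J) :
    ∃ b ∈ J, b ∈ R⁰ ∧ 2 ≤ (span {s, b}).height := by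
  classical
  have hzd := biUnion_associatedPrimes_eq_compl_nonZeroDivisors R
  let P := (span {s}).finite_minimalPrimes_of_isNoetherianRing.toFinset ∪
    (associatedPrimes.finite R R).toFinset
  have hJP : ¬ (J : Set R) ⊆ ⋃ p ∈ (P : Set (Ideal R)), (p : Set R) := by
    refine (subset_union_prime ⊥ ⊥ fun p hp _ _ => ?_).not.mpr ?_
    · simp only [P, Finset.mem_union, Set.Finite.mem_toFinset] at hp
      exact hp.elim (·.isPrime) (·.isPrime)
    · rintro ⟨p, hp, hJp⟩
      simp only [P, Finset.mem_union, Set.Finite.mem_toFinset] at hp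
      rcases hp with hp | hp
      · have := hJ.trans ((height_mono hJp).trans
          (height_le_one_of_isPrincipal_of_mem_minimalPrimes _ p hp))
        norm_num at this
      · have : s ∈ (R⁰ : Set R)ᶜ := hzd ▸ Set.mem_biUnion hp (hJp hsJ)
        exact this hs
  obtain ⟨b, hbJ, hbP⟩ := Set.not_subset.mp hJP
  simp only [P, Finset.coe_union, Set.Finite.coe_toFinset, Set.mem_union, Set.mem_iUnion,
    SetLike.mem_coe, exists_prop, not_exists, not_and, or_imp, forall_and] at hbP
  obtain ⟨hb_min, hb_ass⟩ := hbP
  refine ⟨b, hbJ, ?_, le_height_iff.mpr fun p hp => ?_⟩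
  · by_contra hb
    obtain ⟨p, hp, hbp⟩ :=
      Set.mem_iUnion₂.mp (hzd ▸ hb : b ∈ ⋃ p ∈ associatedPrimes R R, (p : Set R))
    exact hb_ass p hp hbp
  · have hsp : span {s} ≤ p.asIdeal := (span_mono (by simp)).trans hp
    obtain ⟨q, hq, hqp⟩ := exists_minimalPrimes_le hsp
    have := hq.isPrime
    have hqp : q < p.asIdeal :=
      lt_of_le_of_ne hqp fun h => hb_min q hq (h ▸ hp (subset_span (by simp)))
    calc (2 : ℕ∞) = 1 + 1 := by norm_num
      _ ≤ q.height + 1 := by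
        gcongr
        exact (one_le_height_span_singleton_of_mem_nonZeroDivisors hs).trans (height_mono hq.1.2)
      _ ≤ p.asIdeal.height := height_add_one_le_of_lt_of_isPrime hqp

end Height

section HeightTwoClosure

variable (R : Type*) {L : Type*} [CommRing R] [AddCommGroup L] [Module R L]

def heightTwoClosure (S : Set L) : Set L :=
  {f | ∃ I : Ideal R, 2 ≤ I.height ∧ ∀ i ∈ I, i • f ∈ S}

variable {R}

lemma mem_heightTwoClosure_iff (N : Submodule R L) {f : L} :
    f ∈ heightTwoClosure R (N : Set L) ↔ 2 ≤ (N.colon {f}).height :=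
  ⟨fun ⟨_, hI, hIf⟩ => hI.trans (Ideal.height_mono fun i hi =>
      Submodule.mem_colon_singleton.mpr (hIf i hi)),
    fun h => ⟨_, h, fun _ => Submodule.mem_colon_singleton.mp⟩⟩

lemma subset_heightTwoClosure (N : Submodule R L) : (N : Set L) ⊆ heightTwoClosure R N :=
  fun f hf => ⟨⊤, by simp [Ideal.height_top], fun i _ => N.smul_mem i hf⟩

lemma smul_mem_heightTwoClosure (N : Submodule R L) (r : R) {f : L}
    (hf : f ∈ heightTwoClosure R N) : r • f ∈ heightTwoClosure R N := by
  obtain ⟨I, hI, hIf⟩ := hf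
  exact ⟨I, hI, fun i hi => smul_comm i r f ▸ N.smul_mem r (hIf i hi)⟩

lemma heightTwoClosure_heightTwoClosure (N : Submodule R L) :
    heightTwoClosure R (heightTwoClosure R (N : Set L)) = heightTwoClosure R N := by
  refine subset_antisymm (fun f ⟨I, hI, hIf⟩ => ?_) fun f hf =>
    ⟨⊤, by simp [Ideal.height_top], fun i _ => smul_mem_heightTwoClosure N i hf⟩
  rw [mem_heightTwoClosure_iff, Ideal.le_height_iff]
  intro p hp
  by_cases hIp : I ≤ p.asIdeal
  · exact hI.trans (Ideal.height_mono hIp)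
  obtain ⟨i, hiI, hip⟩ := SetLike.not_le_iff_exists.mp hIp
  refine ((mem_heightTwoClosure_iff N).mp (hIf i hiI)).trans (Ideal.height_mono fun j hj => ?_)
  have hji : j * i ∈ N.colon {f} := by
    rw [Submodule.mem_colon_singleton, mul_smul]
    exact Submodule.mem_colon_singleton.mp hj
  exact (p.isPrime.mem_or_mem (hp hji)).resolve_right hip

end HeightTwoClosure

lemma IsLocalizedModule.smul_surjective {R M L : Type*} [CommRing R] {S : Submonoid R}
    [AddCommGroup M] [Module R M] [AddCommGroup L] [Module R L] (g : M →ₗ[R] L)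
    [IsLocalizedModule S g] (s : S) : Function.Surjective fun x : L => s • x :=
  ((Module.End.isUnit_iff _).mp (IsLocalizedModule.map_units g s)).surjective

section Localization

open nonZeroDivisors

variable {R M L : Type*} [CommRing R] [AddCommGroup M] [Module R M] [AddCommGroup L] [Module R L]
  (g : M →ₗ[R] L) [IsLocalizedModule R⁰ g]

lemma exists_smul_eq_of_heightTwoClosure_eq
    (hg : heightTwoClosure R (LinearMap.range g : Set L) = LinearMap.range g)
    {a b : R} (ha : a ∈ R⁰) (hab : 2 ≤ (Ideal.span {a, b}).height) {x y : L}
    (hx : x ∈ LinearMap.range g) (hy : y ∈ LinearMap.range g) (hxy : b • x = a • y) :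
    ∃ z ∈ LinearMap.range g, x = a • z := by
  obtain ⟨z, rfl⟩ := IsLocalizedModule.smul_surjective g ⟨a, ha⟩ x
  have hbz : b • z = y := IsLocalizedModule.smul_injective g ⟨a, ha⟩ <| by
    simpa only [Submonoid.smul_def, smul_comm a b z] using hxy
  refine ⟨z, ?_, rfl⟩
  rw [← SetLike.mem_coe, ← hg]
  refine ⟨_, hab, fun i hi => ?_⟩
  obtain ⟨r, t, rfl⟩ := Ideal.mem_span_pair.mp hi
  rw [add_smul, mul_smul, mul_smul, hbz]
  exact add_mem (Submodule.smul_mem _ r hx) (Submodule.smul_mem _ t hy)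

lemma heightTwoClosure_subset_of_exists_smul_eq [IsNoetherianRing R]
    (hreg : ∀ a b : R, a ∈ R⁰ → b ∈ R⁰ → 2 ≤ (Ideal.span {a, b}).height →
      ∀ x ∈ LinearMap.range g, (∃ y ∈ LinearMap.range g, b • x = a • y) →
        ∃ z ∈ LinearMap.range g, x = a • z) :
    heightTwoClosure R (LinearMap.range g : Set L) ⊆ LinearMap.range g := by
  intro f hf
  rw [mem_heightTwoClosure_iff] at hf
  obtain ⟨⟨m, t⟩, htf⟩ := IsLocalizedModule.surj R⁰ g f
  have htJ : (t : R) ∈ (LinearMap.range g).colon {f} :=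
    Submodule.mem_colon_singleton.mpr ⟨m, htf.symm⟩
  obtain ⟨b, hbJ, hb, htb⟩ := Ideal.exists_mem_nonZeroDivisors_two_le_height_span_pair hf t.2 htJ
  obtain ⟨z, hz, hfz⟩ := hreg t b t.2 hb htb (t • f) ⟨m, htf.symm⟩
    ⟨b • f, Submodule.mem_colon_singleton.mp hbJ, smul_comm b (t : R) f⟩
  rwa [IsLocalizedModule.smul_injective g t hfz]

end Localization

theorem stmt7_general {R : Type*} [CommRing R] [IsNoetherianRing R]
    {M : Type*} [AddCommGroup M] [Module R M]
    (tl : Set (LocalizedModule (nonZeroDivisors R) M) →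
      Set (LocalizedModule (nonZeroDivisors R) M))
    (htl : ∀ S, tl S = {f | ∃ I : Ideal R, 2 ≤ idealHt I ∧ ∀ i ∈ I, i • f ∈ S})
    (M' : Set (LocalizedModule (nonZeroDivisors R) M))
    (hM' : M' = Set.range (LocalizedModule.mkLinearMap (nonZeroDivisors R) M)) :
    (M' = tl M' ↔
      ∀ a b : R, a ∈ nonZeroDivisors R → b ∈ nonZeroDivisors R →
        2 ≤ idealHt (Ideal.span {a, b}) →
        (∀ x ∈ M', a • x = 0 → x = 0) ∧
          (∀ x ∈ M', (∃ y ∈ M', b • x = a • y) → ∃ z ∈ M', x = a • z)) ∧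
    tl (tl M') = tl M' := by
  have htl' : tl = heightTwoClosure R := funext fun S => by
    simp only [htl, idealHt_eq_height]
    rfl
  subst htl' hM'
  set g := LocalizedModule.mkLinearMap (nonZeroDivisors R) M
  simp only [idealHt_eq_height, ← LinearMap.coe_range]
  refine ⟨⟨fun hg a b ha _ hab => ⟨fun x _ hx => ?_, fun x hx ⟨y, hy, hxy⟩ =>
      exists_smul_eq_of_heightTwoClosure_eq g hg.symm ha hab hx hy hxy⟩, fun hreg => ?_⟩,
    heightTwoClosure_heightTwoClosure _⟩
  · exact IsLocalizedModule.smul_injective g ⟨a, ha⟩ (hx.trans (smul_zero a).symm)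
  · exact (subset_heightTwoClosure _).antisymm
      (heightTwoClosure_subset_of_exists_smul_eq g fun a b ha hb hab => (hreg a b ha hb hab).2)

/-- for a Noetherian ring `R` and a torsion-free `R`-module `M`
(with image `M'` inside `V = Q(R) ⊗ M`), one has `M = M̃` iff every pair of
non-zerodivisors `a, b` of `R` with `ht (a,b) ≥ 2` is an `M`-regular sequence;
in particular `M̃ = M̃̃`, where `S̃ = {f ∈ V | If ⊆ S, ht I ≥ 2}`. -/
theorem stmt7 {R : Type*} [CommRing R] [IsNoetherianRing R]
    {M : Type*} [AddCommGroup M] [Module R M]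
    (htf : ∀ r ∈ nonZeroDivisors R, Function.Injective fun x : M => r • x)
    (tl : Set (LocalizedModule (nonZeroDivisors R) M) →
      Set (LocalizedModule (nonZeroDivisors R) M))
    (htl : ∀ S, tl S = {f | ∃ I : Ideal R, 2 ≤ idealHt I ∧ ∀ i ∈ I, i • f ∈ S})
    (M' : Set (LocalizedModule (nonZeroDivisors R) M))
    (hM' : M' = Set.range (LocalizedModule.mkLinearMap (nonZeroDivisors R) M)) :
    (M' = tl M' ↔
      ∀ a b : R, a ∈ nonZeroDivisors R → b ∈ nonZeroDivisors R →
        2 ≤ idealHt (Ideal.span {a, b}) →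
        (∀ x ∈ M', a • x = 0 → x = 0) ∧
          (∀ x ∈ M', (∃ y ∈ M', b • x = a • y) → ∃ z ∈ M', x = a • z)) ∧
    tl (tl M') = tl M' :=
  stmt7_general tl htl M' hM'
end

section
/- Let $R$ be a Noetherian ring and $M$ a finitely generated torsion-free $R$-module. Then $\widetilde{M}=\bigcup_{a\in\mathrm{W}(R)}\frac{\mathrm{U}(aM)}{a}$, where $\mathrm{W}(R)$ is the set of non-zerodivisors of $R$. -/
open Pointwise

/-- `Min¹_R(M/aM)`: the height-one minimal primes of the support of `M/aM`
(equivalently, of the annihilator of `M/aM`, as `M` is finitely generated). -/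
noncomputable def minOne (R : Type*) [CommRing R] (M : Type*) [AddCommGroup M]
    [Module R M] (a : R) : Set (Ideal R) :=
  {p | p ∈ (Module.annihilator R (M ⧸ (a • (⊤ : Submodule R M)))).minimalPrimes ∧
    idealHt p = 1}

/-- `U(aM)`: the intersection of the primary components of `aM` in `M` at the
height-one minimal primes of `M/aM` (the primary component at a minimal prime
`p` being the saturation `{x ∈ M | sx ∈ aM for some s ∉ p}`); by convention
`U(aM) = M` when there are no such primes. -/
noncomputable def Uset (R : Type*) [CommRing R] (M : Type*) [AddCommGroup M]
    [Module R M] (a : R) : Set M :=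
  ⋂ p ∈ minOne R M a, {x : M | ∃ s, s ∉ p ∧ s • x ∈ (a • (⊤ : Submodule R M))}

/-! Both sides are governed by the conductor ideal `(M :_R f) = {r | r f ∈ M}`, and `f ∈ M̃`
exactly when it has height at least two. If `a f = x ∈ M` with `a` a non-zerodivisor, then
torsion-freeness identifies `(M :_R f)` with `(aM :_R x)`, and `x ∈ U(aM)` says that
`(aM :_R x)` lies in no height-one minimal prime of `M/aM`. That is the same as height at least
two: a prime `P ⊇ (aM :_R x)` contains a minimal prime `q` of `M/aM`, and `q` has height at least
one because it contains the non-zerodivisor `a`; so if `P` has height at most one, then `P = q`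
is one of the height-one minimal primes. -/

open Submodule

section Height

variable {R : Type*} [CommRing R]

theorem le_idealHt_iff {I : Ideal R} {n : ℕ∞} :
    n ≤ idealHt I ↔ ∀ P : PrimeSpectrum R, I ≤ P.asIdeal → n ≤ Order.height P := by
  simp only [idealHt, Set.mem_ofPred_eq, le_iInf_iff]

theorem idealHt_mono {I J : Ideal R} (h : I ≤ J) : idealHt I ≤ idealHt J :=
  le_idealHt_iff.mpr fun P hP => iInf₂_le P (h.trans hP)

theorem idealHt_asIdeal (P : PrimeSpectrum R) : idealHt P.asIdeal = Order.height P :=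
  le_antisymm (iInf₂_le P le_rfl) (le_idealHt_iff.mpr fun _ hQ => Order.height_mono hQ)

theorem one_le_height_of_mem_nonZeroDivisors {P : PrimeSpectrum R} {a : R}
    (ha : a ∈ nonZeroDivisors R) (haP : a ∈ P.asIdeal) : 1 ≤ Order.height P := by
  rw [Order.one_le_iff_pos, Order.height_pos, PrimeSpectrum.isMin_iff]
  exact fun hmin =>
    Set.disjoint_left.mp (Ideal.disjoint_nonZeroDivisors_of_mem_minimalPrimes hmin) haP ha

end Height

section Uset

variable {R : Type*} [CommRing R] {M : Type*} [AddCommGroup M] [Module R M]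

theorem mem_annihilator_quotient_smul_top (a : R) :
    a ∈ Module.annihilator R (M ⧸ (a • (⊤ : Submodule R M))) := by
  rw [annihilator_quotient, mem_colon]
  exact fun x _ => smul_mem_pointwise_smul x a ⊤ trivial

theorem mem_Uset_iff_two_le_idealHt {a : R} (ha : a ∈ nonZeroDivisors R) {x : M} :
    x ∈ Uset R M a ↔ 2 ≤ idealHt ((a • (⊤ : Submodule R M)).colon {x}) := by
  simp only [Uset, Set.mem_iInter₂, Set.mem_ofPred_eq]
  constructor
  · intro hx
    refine le_idealHt_iff.mpr fun P hP => ?_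
    have hann : Module.annihilator R (M ⧸ (a • (⊤ : Submodule R M))) ≤ P.asIdeal := by
      rw [annihilator_quotient]
      exact (colon_mono le_rfl (Set.subset_univ _)).trans hP
    obtain ⟨q, hq, hqP⟩ := Ideal.exists_minimalPrimes_le hann
    let Q : PrimeSpectrum R := ⟨q, hq.1.1⟩
    have hQ : 1 ≤ Order.height Q :=
      one_le_height_of_mem_nonZeroDivisors ha (hq.1.2 (mem_annihilator_quotient_smul_top a))
    by_contra! hP2
    have hQP : Q = P := by
      by_contra hne
      have : (2 : ℕ∞) ≤ Order.height P := calc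
        (2 : ℕ∞) = 1 + 1 := by norm_num
        _ ≤ Order.height Q + 1 := by gcongr
        _ ≤ Order.height P := Order.height_add_one_le (lt_of_le_of_ne hqP hne)
      exact this.not_gt hP2
    have hP1 : Order.height P = 1 :=
      le_antisymm (Order.le_of_lt_add_one hP2) (hQP ▸ hQ)
    obtain ⟨t, htP, htx⟩ :=
      hx P.asIdeal ⟨hQP ▸ hq, (idealHt_asIdeal P).trans hP1⟩
    exact htP (hP (mem_colon_singleton.mpr htx))
  · intro hx p hp
    have hnle : ¬ (a • (⊤ : Submodule R M)).colon {x} ≤ p := fun hle => by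
      have := (hx.trans (idealHt_mono hle)).trans_eq hp.2
      norm_num at this
    obtain ⟨r, hr, hrp⟩ := SetLike.not_le_iff_exists.mp hnle
    exact ⟨r, hrp, mem_colon_singleton.mp hr⟩

end Uset

section Localization

variable {R : Type*} [CommRing R] {M : Type*} [AddCommGroup M] [Module R M] {S : Submonoid R}

theorem smul_top_colon_eq_range_mkLinearMap_colon
    (hinj : Function.Injective (LocalizedModule.mkLinearMap S M)) {a : R} (ha : a ∈ S)
    {f : LocalizedModule S M} {x : M} (hx : LocalizedModule.mkLinearMap S M x = a • f) :
    (a • (⊤ : Submodule R M)).colon {x} =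
      (LinearMap.range (LocalizedModule.mkLinearMap S M)).colon {f} := by
  set mk := LocalizedModule.mkLinearMap S M
  ext r
  simp only [mem_colon_singleton, mem_smul_pointwise_iff_exists, mem_top, true_and,
    LinearMap.mem_range]
  have hcancel : ∀ y, r • mk x = a • mk y ↔ r • f = mk y := fun y => by
    rw [hx, smul_comm]
    exact (IsLocalizedModule.smul_injective mk ⟨a, ha⟩).eq_iff
  refine exists_congr fun y => ?_
  rw [eq_comm (a := mk y), ← hcancel, ← map_smul, ← map_smul, hinj.eq_iff, eq_comm]

end Localization

theorem stmt13_general {R : Type*} [CommRing R]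
    {M : Type*} [AddCommGroup M] [Module R M]
    (htf : ∀ r ∈ nonZeroDivisors R, Function.Injective fun x : M => r • x) :
    {f : LocalizedModule (nonZeroDivisors R) M | ∃ I : Ideal R, 2 ≤ idealHt I ∧ ∀ i ∈ I,
        i • f ∈ LinearMap.range (LocalizedModule.mkLinearMap (nonZeroDivisors R) M)} =
      ⋃ a ∈ nonZeroDivisors R,
        {f | a • f ∈ (LocalizedModule.mkLinearMap (nonZeroDivisors R) M) '' Uset R M a} := by
  have hinj : Function.Injective (LocalizedModule.mkLinearMap (nonZeroDivisors R) M) :=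
    (IsLocalizedModule.injective_iff_isRegular _ _).mpr fun c => htf c c.2
  ext f
  simp only [Set.mem_ofPred_eq, Set.mem_iUnion, Set.mem_image, exists_prop]
  constructor
  · rintro ⟨I, hI, hIf⟩
    induction f using LocalizedModule.induction_on with | _ m s => ?_
    have hm : LocalizedModule.mkLinearMap _ M m = (s : R) • LocalizedModule.mk m s := by
      rw [LocalizedModule.smul'_mk, ← Submonoid.smul_def, LocalizedModule.mk_cancel]; rfl
    refine ⟨s, s.2, m, ?_, hm⟩
    rw [mem_Uset_iff_two_le_idealHt s.2, smul_top_colon_eq_range_mkLinearMap_colon hinj s.2 hm]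
    exact hI.trans (idealHt_mono fun i hi => mem_colon_singleton.mpr (hIf i hi))
  · rintro ⟨a, ha, x, hxU, hxf⟩
    refine ⟨_, (mem_Uset_iff_two_le_idealHt ha).mp hxU, fun i hi => ?_⟩
    rw [smul_top_colon_eq_range_mkLinearMap_colon hinj ha hxf] at hi
    exact mem_colon_singleton.mp hi

/-- for a finitely generated torsion-free module `M` over a
Noetherian ring `R`, `M̃ = ⋃_{a ∈ W(R)} U(aM)/a` inside `V = Q(R) ⊗ M`. -/
theorem stmt13 {R : Type*} [CommRing R] [IsNoetherianRing R]
    {M : Type*} [AddCommGroup M] [Module R M] [Module.Finite R M]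
    (htf : ∀ r ∈ nonZeroDivisors R, Function.Injective fun x : M => r • x) :
    {f : LocalizedModule (nonZeroDivisors R) M | ∃ I : Ideal R, 2 ≤ idealHt I ∧ ∀ i ∈ I,
        i • f ∈ LinearMap.range (LocalizedModule.mkLinearMap (nonZeroDivisors R) M)} =
      ⋃ a ∈ nonZeroDivisors R,
        {f | a • f ∈ (LocalizedModule.mkLinearMap (nonZeroDivisors R) M) '' Uset R M a} :=
  stmt13_general htf
end
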